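/- Let $A \xrightarrow{f} B \xrightarrow{g} C \xrightarrow{h} D \xrightarrow{k} E$ be an exact sequence of abelian groups. Assume that the cokernel of $f$ is a torsion group and that $D$ is torsion-free. Then the maximal torsion-free quotient $C/C_{\mathrm{tors}}$ of $C$ is isomorphic to $\ker(k : D \to E)$. -/
import Mathlib


/-- Given an exact sequence `A → B → C → D → E` of abelian groups with the
cokernel of `A → B` torsion and `D` torsion-free, the maximal torsion-free
quotient of `C` is isomorphic to the kernel of `D → E`. -/
theorem torsionFreeQuotient_iso_ker
    {A B C D E : Type*} [AddCommGroup A] [AddCommGroup B] [AddCommGroup C]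
    [AddCommGroup D] [AddCommGroup E]
    (f : A →+ B) (g : B →+ C) (h : C →+ D) (k : D →+ E)
    (hfg : Function.Exact ⇑f ⇑g) (hgh : Function.Exact ⇑g ⇑h)
    (hhk : Function.Exact ⇑h ⇑k)
    (hcoker : ∀ b : B, ∃ m : ℕ, 0 < m ∧ m • b ∈ Set.range f)
    (htf : ∀ (d : D) (m : ℕ), 0 < m → m • d = 0 → d = 0) :
    Nonempty ((C ⧸ AddCommGroup.torsion C) ≃+ k.ker) := by
  set h' : C →+ k.ker := h.codRestrict k.ker (fun c => (hhk (h c)).mpr ⟨c, rfl⟩)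
  have hsurj : Function.Surjective h' := by
    rintro ⟨d, hd⟩
    obtain ⟨c, rfl⟩ := (hhk d).mp hd
    exact ⟨c, rfl⟩
  have hker : h'.ker = AddCommGroup.torsion C := by
    ext c
    constructor
    · intro hc
      have hc0 : h c = 0 := congrArg Subtype.val hc
      obtain ⟨b, rfl⟩ := (hgh c).mp hc0
      obtain ⟨m, hm, a, ha⟩ := hcoker b
      refine isOfFinAddOrder_iff_nsmul_eq_zero.mpr ⟨m, hm, ?_⟩
      rw [← map_nsmul, ← ha]
      exact (hfg (f a)).mpr ⟨a, rfl⟩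
    · intro hc
      obtain ⟨m, hm, hmc⟩ := isOfFinAddOrder_iff_nsmul_eq_zero.mp hc
      have : m • h c = 0 := by rw [← map_nsmul, hmc, map_zero]
      exact Subtype.ext (htf (h c) m hm this)
  exact ⟨(QuotientAddGroup.quotientAddEquivOfEq hker.symm).trans
    (QuotientAddGroup.quotientKerEquivOfSurjective h' hsurj)⟩
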